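/- For any real symmetric matrix Y with tr(Y) = n and kY − J_n positive semidefinite, where L is a graph Laplacian with largest eigenvalue λ_max, one has (1/2)tr(LY) ≤ (n(k−1)/(2k))·λ_max; moreover this bound is attained by some such Y, so the optimal value of the SDP max{(1/2)tr(LY) : tr(Y) = n, kY − J_n ⪰ 0} equals (n(k−1)/(2k))·λ_max. -/

import Mathlib

/-!
Since `lam` bounds the spectrum of the symmetric matrix `L`, the matrix `lam • 1 - L` is positive
semidefinite, and the trace of a product of two positive semidefinite matrices is nonnegative.
Pairing `lam • 1 - L` with `k • Y - J` and using `L J = 0` gives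
`0 ≤ lam (k tr Y - n) - k tr (L Y)`, which is the bound. It is attained by
`Y = k⁻¹ J + c v vᵀ` for a top eigenvector `v`, with `c` chosen to make `tr Y = n`:
then `k Y - J = k c v vᵀ` is positive semidefinite and `tr (L Y) = c lam ‖v‖²`.
-/

def cutSize {n k : ℕ} (G : SimpleGraph (Fin n)) [DecidableRel G.Adj] (f : Fin n → Fin k) : ℕ :=
  (G.edgeFinset.filter (fun e => ¬ (Sym2.map f e).IsDiag)).card

def hasEigenvalue {n : ℕ} (M : Matrix (Fin n) (Fin n) ℝ) (μ : ℝ) : Prop :=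
  ∃ v : Fin n → ℝ, v ≠ 0 ∧ M.mulVec v = μ • v

def isLargestEigenvalue {n : ℕ} (M : Matrix (Fin n) (Fin n) ℝ) (lam : ℝ) : Prop :=
  hasEigenvalue M lam ∧ ∀ μ : ℝ, hasEigenvalue M μ → μ ≤ lam

open Matrix
open scoped ComplexOrder

namespace Matrix

variable {n α : Type*}

lemma of_const_one_eq_vecMulVec [MulOneClass α] :
    (of fun _ _ => 1 : Matrix n n α) = vecMulVec (fun _ => 1) (fun _ => 1) := by
  ext; simp [vecMulVec_apply]

variable [Fintype n]

lemma trace_of_const_one [NonAssocSemiring α] :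
    (of fun _ _ => 1 : Matrix n n α).trace = Fintype.card n := by
  simp [of_const_one_eq_vecMulVec, dotProduct]

lemma trace_mul_of_const_one_eq_zero [Semiring α] {L : Matrix n n α}
    (hL1 : L *ᵥ (fun _ => 1) = 0) :
    (L * of fun _ _ => 1).trace = 0 := by
  simp [of_const_one_eq_vecMulVec, mul_vecMulVec, hL1]

lemma PosSemidef.trace_mul_nonneg {𝕜 : Type*} [RCLike 𝕜]
    {A B : Matrix n n 𝕜} (hA : A.PosSemidef) (hB : B.PosSemidef) : 0 ≤ (A * B).trace := by
  classical
  open scoped MatrixOrder in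
  obtain ⟨C, rfl⟩ := CStarAlgebra.nonneg_iff_eq_star_mul_self.mp hB.nonneg
  rw [← Matrix.mul_assoc, trace_mul_cycle]
  exact (hA.mul_mul_conjTranspose_same C).trace_nonneg

end Matrix

lemma hasEigenvalue_of_mem_spectrum {n : ℕ} {M : Matrix (Fin n) (Fin n) ℝ} {μ : ℝ}
    (h : μ ∈ spectrum ℝ M) : hasEigenvalue M μ := by
  rw [← spectrum_toLin', ← Module.End.hasEigenvalue_iff_mem_spectrum] at h
  obtain ⟨v, hv⟩ := h.exists_hasEigenvector
  exact ⟨v, hv.2, by simpa using hv.apply_eq_smul⟩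

lemma posSemidef_smul_one_sub_of_hasEigenvalue_le {n : ℕ} {M : Matrix (Fin n) (Fin n) ℝ}
    {lam : ℝ} (hM : M.IsHermitian) (h : ∀ μ, hasEigenvalue M μ → μ ≤ lam) :
    (lam • 1 - M).PosSemidef := by
  open scoped MatrixOrder in
  have hle : M ≤ algebraMap ℝ _ lam :=
    le_algebraMap_of_spectrum_le (fun μ hμ => h μ (hasEigenvalue_of_mem_spectrum hμ))
      hM.isSelfAdjoint
  rwa [Algebra.algebraMap_eq_smul_one, Matrix.le_iff] at hle

section
variable {n : Type*} [Fintype n]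

lemma mul_trace_mul_le_of_posSemidef [DecidableEq n] {L Y : Matrix n n ℝ} {lam k : ℝ}
    (hL : (lam • 1 - L).PosSemidef) (hL1 : L *ᵥ (fun _ => 1) = 0)
    (hY : (k • Y - of fun _ _ => 1).PosSemidef) :
    k * (L * Y).trace ≤ lam * (k * Y.trace - Fintype.card n) := by
  have hexp : ((lam • 1 - L) * (k • Y - of fun _ _ => 1)).trace =
      lam * (k * Y.trace - Fintype.card n) - k * (L * Y).trace := by
    simp only [sub_mul, mul_sub, smul_mul, one_mul, Matrix.mul_smul, trace_sub, trace_smul,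
      trace_of_const_one, trace_mul_of_const_one_eq_zero hL1, smul_eq_mul]
    ring
  linarith [hL.trace_mul_nonneg hY]

lemma exists_isSymm_trace_mul_eq_of_mulVec_eq_smul {L : Matrix n n ℝ} {lam k : ℝ} (hk : 1 ≤ k)
    (hL1 : L *ᵥ (fun _ => 1) = 0) {v : n → ℝ} (hv : v ≠ 0) (hLv : L *ᵥ v = lam • v) :
    ∃ Y : Matrix n n ℝ, Y.IsSymm ∧ Y.trace = Fintype.card n ∧
      (k • Y - of fun _ _ => 1).PosSemidef ∧
      k * (L * Y).trace = lam * (k - 1) * Fintype.card n := by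
  have hvv : 0 < v ⬝ᵥ v := by simpa using dotProduct_star_self_pos_iff.mpr hv
  set c := (k - 1) * Fintype.card n / (k * (v ⬝ᵥ v)) with hc
  refine ⟨k⁻¹ • of (fun _ _ => 1) + c • vecMulVec v v, ?_, ?_, ?_, ?_⟩
  · ext i j
    simp [vecMulVec_apply, mul_comm]
  · rw [trace_add, trace_smul, trace_smul, trace_of_const_one, trace_vecMulVec, smul_eq_mul,
      smul_eq_mul, hc]
    field_simp
    ring
  · have hkY : k • (k⁻¹ • of (fun _ _ => 1) + c • vecMulVec v v) - of (fun _ _ => (1 : ℝ)) =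
        (k * c) • vecMulVec v v := by
      rw [smul_add, smul_smul, smul_smul, mul_inv_cancel₀ (by positivity), one_smul,
        add_sub_cancel_left]
    rw [hkY]
    exact (posSemidef_vecMulVec_self_star v).smul (by positivity)
  · rw [mul_add, Matrix.mul_smul, Matrix.mul_smul, trace_add, trace_smul, trace_smul,
      trace_mul_of_const_one_eq_zero hL1, smul_zero, zero_add, mul_vecMulVec, hLv,
      trace_vecMulVec, smul_dotProduct, smul_eq_mul, smul_eq_mul, hc]
    field_simp

end

theorem stmt_19_general {n k : ℕ} (hk2 : 2 ≤ k)
    (L : Matrix (Fin n) (Fin n) ℝ) (hL : L.PosSemidef)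
    (hL1 : L.mulVec (fun _ => 1) = 0)
    (lam : ℝ) (hlam : isLargestEigenvalue L lam) :
    (∀ Y : Matrix (Fin n) (Fin n) ℝ, Y.IsSymm → Y.trace = n →
        ((k : ℝ) • Y - Matrix.of (fun _ _ => (1 : ℝ))).PosSemidef →
        (1 / 2) * (L * Y).trace ≤ (n : ℝ) * ((k : ℝ) - 1) / (2 * k) * lam) ∧
    (∃ Y : Matrix (Fin n) (Fin n) ℝ, Y.IsSymm ∧ Y.trace = n ∧
        ((k : ℝ) • Y - Matrix.of (fun _ _ => (1 : ℝ))).PosSemidef ∧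
        (1 / 2) * (L * Y).trace = (n : ℝ) * ((k : ℝ) - 1) / (2 * k) * lam) := by
  have hk : (1 : ℝ) ≤ k := by exact_mod_cast one_le_two.trans hk2
  constructor
  · intro Y _ hY hkY
    have h := mul_trace_mul_le_of_posSemidef
      (posSemidef_smul_one_sub_of_hasEigenvalue_le hL.1 hlam.2) hL1 hkY
    rw [hY, Fintype.card_fin] at h
    have hk0 : (0 : ℝ) < k := by linarith
    calc (1 / 2) * (L * Y).trace = k * (L * Y).trace / (2 * k) := by field_simp
      _ ≤ lam * (k * n - n) / (2 * k) := by gcongr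
      _ = n * (k - 1) / (2 * k) * lam := by ring
  · obtain ⟨v, hv, hLv⟩ := hlam.1
    obtain ⟨Y, hYs, hYt, hkY, hLY⟩ := exists_isSymm_trace_mul_eq_of_mulVec_eq_smul hk hL1 hv hLv
    rw [Fintype.card_fin] at hYt hLY
    refine ⟨Y, hYs, hYt, hkY, ?_⟩
    field_simp
    linarith

theorem stmt_19 {n k : ℕ} (hk2 : 2 ≤ k) (hkn : k ≤ n)
    (L : Matrix (Fin n) (Fin n) ℝ) (hL : L.PosSemidef)
    (hL1 : L.mulVec (fun _ => 1) = 0)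
    (lam : ℝ) (hlam : isLargestEigenvalue L lam) :
    (∀ Y : Matrix (Fin n) (Fin n) ℝ, Y.IsSymm → Y.trace = n →
        ((k : ℝ) • Y - Matrix.of (fun _ _ => (1 : ℝ))).PosSemidef →
        (1 / 2) * (L * Y).trace ≤ (n : ℝ) * ((k : ℝ) - 1) / (2 * k) * lam) ∧
    (∃ Y : Matrix (Fin n) (Fin n) ℝ, Y.IsSymm ∧ Y.trace = n ∧
        ((k : ℝ) • Y - Matrix.of (fun _ _ => (1 : ℝ))).PosSemidef ∧
        (1 / 2) * (L * Y).trace = (n : ℝ) * ((k : ℝ) - 1) / (2 * k) * lam) :=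
  stmt_19_general hk2 L hL hL1 lam hlam
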